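/- Let g : ℝᵈ → ℝᵐ × ℝⁿ be a measurable equivalence (a bijection that is measurable with measurable inverse), let λ be an ℝᵈ-valued random variable, and set (C, Z) = g(λ). Suppose the joint law of (C, Z) has a strictly positive density q on ℝᵐ × ℝⁿ satisfying log q(c,z) − log q(c,z') = log φ(z) − log φ(z') for all c ∈ ℝᵐ and z, z' ∈ ℝⁿ, where φ(z) = (2π)^{−n/2} exp(−‖z‖²/2) is the standard Gaussian density on ℝⁿ. Then for Law(C)-almost every c̃ ∈ ℝᵐ, the conditional distribution of λ given C = c̃ equals the pushforward of the standard Gaussian measure N(0, Iₙ) on ℝⁿ under the map z ↦ g⁻¹(c̃, z). -/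

import Mathlib

open MeasureTheory ProbabilityTheory

/-! A strictly positive density whose log-ratios in `z` are those of `φ` factorizes as
`q (c, z) = f c · φ z`, so the law of `(C, Z)` is the product of the law of `C` with the standard
Gaussian. Hence `C` and `Z` are independent, the conditional law of `Z` given `C = c` is the
Gaussian, and since `λ = g⁻¹ (C, Z)` the conditional law of `λ` given `C = c` is its image
under `z ↦ g⁻¹ (c, z)`. -/

section Gaussian

variable (V : Type*) [NormedAddCommGroup V] [InnerProductSpace ℝ V]

noncomputable def stdGaussianDensity (v : V) : ℝ :=
  (2 * Real.pi) ^ (-(Module.finrank ℝ V : ℝ) / 2) * Real.exp (-‖v‖ ^ 2 / 2)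

variable {V}

theorem stdGaussianDensity_pos (v : V) : 0 < stdGaussianDensity V v := by
  unfold stdGaussianDensity; positivity

variable [MeasurableSpace V] [BorelSpace V]

theorem measurable_stdGaussianDensity : Measurable (stdGaussianDensity V) := by
  unfold stdGaussianDensity; fun_prop

variable [FiniteDimensional ℝ V]

theorem integrable_stdGaussianDensity : Integrable (stdGaussianDensity V) := by
  refine ((GaussianFourier.integrable_cexp_neg_mul_sq_norm_add (V := V) (b := 1 / 2)
    (by norm_num) 0 0).norm.const_mul
    ((2 * Real.pi) ^ (-(Module.finrank ℝ V : ℝ) / 2))).congr (.of_forall fun v => ?_)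
  simp [stdGaussianDensity, Complex.norm_exp, ← Complex.ofReal_pow, div_eq_inv_mul]

theorem integral_stdGaussianDensity : ∫ v, stdGaussianDensity V v = 1 := by
  have hexp : ∀ x : ℝ, -x / 2 = -(1 / 2 : ℝ) * x := fun x => by ring
  simp only [stdGaussianDensity, hexp, integral_const_mul,
    GaussianFourier.integral_rexp_neg_mul_sq_norm (one_half_pos (α := ℝ))]
  rw [show Real.pi / (1 / 2) = 2 * Real.pi by ring, ← Real.rpow_add (by positivity),
    show -(1 / 2) * (Module.finrank ℝ V : ℝ) + Module.finrank ℝ V / 2 = 0 by ring, Real.rpow_zero]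

instance isProbabilityMeasure_withDensity_stdGaussianDensity :
    IsProbabilityMeasure (volume.withDensity fun v => ENNReal.ofReal (stdGaussianDensity V v)) := by
  constructor
  rw [withDensity_apply _ MeasurableSet.univ, setLIntegral_univ,
    ← ofReal_integral_eq_lintegral_ofReal, integral_stdGaussianDensity, ENNReal.ofReal_one]
  · exact integrable_stdGaussianDensity
  · exact .of_forall fun v => (stdGaussianDensity_pos v).le

end Gaussian

section ProductDensity

variable {α β : Type*}

theorem eq_div_mul_of_log_sub_log_eq {q : α × β → ℝ} {φ : β → ℝ} (hq : ∀ x, 0 < q x)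
    (hφ : ∀ z, 0 < φ z)
    (h : ∀ c z z', Real.log (q (c, z)) - Real.log (q (c, z')) = Real.log (φ z) - Real.log (φ z'))
    (c : α) (z z₀ : β) : q (c, z) = q (c, z₀) / φ z₀ * φ z := by
  have hz₀ := hq (c, z₀)
  have hφz₀ := hφ z₀
  have hφz := hφ z
  refine Real.log_injOn_pos (hq _) (Set.mem_Ioi.2 (by positivity)) ?_
  rw [Real.log_mul (by positivity) hφz.ne', Real.log_div hz₀.ne' hφz₀.ne']
  linarith [h c z z₀]

variable [MeasurableSpace α] [MeasurableSpace β]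

theorem withDensity_ofReal_eq_prod_of_log_sub_log_eq {μ : Measure α} {ν : Measure β} [SFinite ν]
    {q : α × β → ℝ} {φ : β → ℝ} (hq_meas : Measurable q) (hφ_meas : Measurable φ)
    (hq : ∀ x, 0 < q x) (hφ : ∀ z, 0 < φ z)
    (h : ∀ c z z', Real.log (q (c, z)) - Real.log (q (c, z')) = Real.log (φ z) - Real.log (φ z'))
    (z₀ : β) :
    (μ.prod ν).withDensity (fun x => ENNReal.ofReal (q x))
      = (μ.withDensity fun c => ENNReal.ofReal (q (c, z₀) / φ z₀)).prod
          (ν.withDensity fun z => ENNReal.ofReal (φ z)) := by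
  have hf_meas : Measurable fun c => q (c, z₀) / φ z₀ := by fun_prop
  rw [prod_withDensity hf_meas.ennreal_ofReal hφ_meas.ennreal_ofReal]
  congr with ⟨c, z⟩
  rw [eq_div_mul_of_log_sub_log_eq hq hφ h c z z₀,
    ENNReal.ofReal_mul (div_pos (hq _) (hφ _)).le]

end ProductDensity

namespace ProbabilityTheory

variable {α β γ : Type*} [MeasurableSpace α] [MeasurableSpace β] [MeasurableSpace γ]
  {ν : Measure β} [SFinite ν] {F : α × β → γ}

theorem Kernel.map_id_prod_const_apply (hF : Measurable F) (a : α) :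
    (Kernel.id ×ₖ Kernel.const α ν).map F a = ν.map fun b => F (a, b) := by
  rw [Kernel.map_apply _ hF, Kernel.prod_apply, Kernel.id_apply, Kernel.const_apply,
    Measure.dirac_prod, Measure.map_map hF measurable_prodMk_left]
  rfl

theorem Measure.compProd_map_id_prod_const (μ : Measure α) [SFinite μ] (hF : Measurable F) :
    μ ⊗ₘ (Kernel.id ×ₖ Kernel.const α ν).map F = (μ.prod ν).map fun p => (p.1, F p) := by
  have hmk : Measurable fun p : α × β => (p.1, F p) := measurable_fst.prodMk hF
  ext s hs
  rw [Measure.map_apply hmk hs, Measure.prod_apply (hmk hs), Measure.compProd_apply hs]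
  refine lintegral_congr fun a => ?_
  rw [Kernel.map_id_prod_const_apply hF,
    Measure.map_apply (by fun_prop) (measurable_prodMk_left hs)]
  rfl

theorem condDistrib_ae_eq_map_of_map_prodMk_eq_prod [StandardBorelSpace γ] [Nonempty γ]
    {Ω : Type*} [MeasurableSpace Ω] {P : Measure Ω} [IsFiniteMeasure P] {X : Ω → α} {Y : Ω → β}
    (hX : Measurable X) (hY : Measurable Y) {μ : Measure α} [SFinite μ] [IsProbabilityMeasure ν]
    (hXY : P.map (fun ω => (X ω, Y ω)) = μ.prod ν) (hF : Measurable F) :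
    ∀ᵐ a ∂(P.map X), condDistrib (fun ω => F (X ω, Y ω)) X P a = ν.map fun b => F (a, b) := by
  have hPX : P.map X = μ := by rw [← Measure.fst_map_prodMk hY, hXY, Measure.fst_prod]
  have hmk : Measurable fun p : α × β => (p.1, F p) := measurable_fst.prodMk hF
  have hcomp : P.map (fun ω => (X ω, F (X ω, Y ω)))
      = P.map X ⊗ₘ (Kernel.id ×ₖ Kernel.const α ν).map F := by
    rw [hPX, Measure.compProd_map_id_prod_const μ hF, ← hXY, Measure.map_map hmk (hX.prodMk hY)]
    rfl
  filter_upwards [condDistrib_ae_eq_of_measure_eq_compProd_of_measurable hX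
    (hF.comp (hX.prodMk hY)) hcomp] with a ha
  exact ha.trans (Kernel.map_id_prod_const_apply hF a)

end ProbabilityTheory

/-- PI-INN asymptotic correctness: if `g : ℝᵈ ≃ᵐ ℝᵐ × ℝⁿ`, `(C, Z) = g ∘ lam`, the joint
law of `(C, Z)` has a strictly positive density `q` satisfying the vanishing-independence
condition `log q (c, z) − log q (c, z') = log φ z − log φ z'` with `φ` the standard
Gaussian density on ℝⁿ, then for `Law(C)`-a.e. `c̃`, the conditional distribution of
`lam` given `C = c̃` equals the pushforward under `z ↦ g⁻¹ (c̃, z)` of the standard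
Gaussian measure `N(0, Iₙ)` (the measure with density `φ` w.r.t. Lebesgue). -/
theorem stmt4 (d m n : ℕ) (Ω : Type*) [MeasureSpace Ω]
    [IsProbabilityMeasure (ℙ : Measure Ω)]
    (g : EuclideanSpace ℝ (Fin d) ≃ᵐ
      (EuclideanSpace ℝ (Fin m) × EuclideanSpace ℝ (Fin n)))
    (lam : Ω → EuclideanSpace ℝ (Fin d)) (hlam : Measurable lam)
    (C : Ω → EuclideanSpace ℝ (Fin m)) (Z : Ω → EuclideanSpace ℝ (Fin n))
    (hC : C = fun ω => (g (lam ω)).1) (hZ : Z = fun ω => (g (lam ω)).2)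
    (q : EuclideanSpace ℝ (Fin m) × EuclideanSpace ℝ (Fin n) → ℝ)
    (hq_meas : Measurable q) (hq_pos : ∀ x, 0 < q x)
    (hjoint : Measure.map (fun ω => (C ω, Z ω)) ℙ
      = volume.withDensity (fun x => ENNReal.ofReal (q x)))
    (φ : EuclideanSpace ℝ (Fin n) → ℝ)
    (hφ : ∀ z, φ z = (2 * Real.pi) ^ (-(n : ℝ) / 2) * Real.exp (-‖z‖ ^ 2 / 2))
    (h : ∀ (c : EuclideanSpace ℝ (Fin m)) (z z' : EuclideanSpace ℝ (Fin n)),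
      Real.log (q (c, z)) - Real.log (q (c, z'))
        = Real.log (φ z) - Real.log (φ z')) :
    ∀ᵐ c ∂(Measure.map C ℙ),
      condDistrib lam C ℙ c
        = Measure.map (fun z => g.symm (c, z))
            (volume.withDensity (fun z => ENNReal.ofReal (φ z))) := by
  obtain rfl : φ = stdGaussianDensity (EuclideanSpace ℝ (Fin n)) :=
    funext fun z => by rw [hφ, stdGaussianDensity, finrank_euclideanSpace_fin]
  have hCm : Measurable C := hC ▸ (g.measurable.comp hlam).fst
  have hZm : Measurable Z := hZ ▸ (g.measurable.comp hlam).snd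
  have hlam_eq : lam = fun ω => g.symm (C ω, Z ω) := by simp [hC, hZ]
  rw [hlam_eq]
  refine condDistrib_ae_eq_map_of_map_prodMk_eq_prod hCm hZm (hjoint.trans ?_) g.symm.measurable
    (μ := volume.withDensity fun c =>
      ENNReal.ofReal (q (c, 0) / stdGaussianDensity (EuclideanSpace ℝ (Fin n)) 0))
  rw [Measure.volume_eq_prod]
  exact withDensity_ofReal_eq_prod_of_log_sub_log_eq hq_meas measurable_stdGaussianDensity
    hq_pos stdGaussianDensity_pos h 0
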